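/- Let G = AH be a minimal decomposition of a semiabelian p-group G. Then A ∩ H ⊆ A^p[A,H]; that is, every element of A ∩ H maps to the identity in A/A^p[A,H]. -/

import Mathlib

open scoped Pointwise
open scoped commutatorElement

/-- The minimal family of finite p-groups containing the trivial group, closed under
semidirect products with abelian p-groups, and closed under quotients. -/
inductive IsSemiabelianP (p : ℕ) : ∀ (G : Type) [Group G], Prop where
  | triv : IsSemiabelianP p PUnit
  | sdp {A H : Type} [CommGroup A] [Group H] [Finite A] [Finite H]
      (hA : IsPGroup p A) (hH' : IsPGroup p H)
      (φ : H →* MulAut A) (hH : IsSemiabelianP p H) : IsSemiabelianP p (A ⋊[φ] H)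
  | quot {G₁ G₂ : Type} [Group G₁] [Group G₂] [Finite G₁] (f : G₁ →* G₂)
      (hf : Function.Surjective f) (hG : IsSemiabelianP p G₁) : IsSemiabelianP p G₂

/-- `A^p[A,H]`: the subgroup generated by `p`-th powers of elements of `A`
together with commutators `[a,h]` for `a ∈ A`, `h ∈ H`. -/
def pPowComm (p : ℕ) {G : Type} [Group G] (A H : Subgroup G) : Subgroup G :=
  Subgroup.closure ({x | ∃ a ∈ A, x = a ^ p} ∪ {x | ∃ a ∈ A, ∃ h ∈ H, x = ⁅a, h⁆})

/-- A decomposition of `G`: an abelian normal subgroup `A` and a proper semiabelian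
subgroup `H` with `G = AH`. -/
structure IsDecomposition (p : ℕ) {G : Type} [Group G] (A H : Subgroup G) : Prop where
  normal : A.Normal
  comm : IsMulCommutative ↥A
  semi : IsSemiabelianP p ↥H
  proper : H ≠ ⊤
  prod : (A : Set G) * (H : Set G) = Set.univ

/-- A minimal decomposition of `G`: `A` is minimal among abelian normal subgroups
admitting a proper semiabelian complement, and `H` is minimal among semiabelian
subgroups with `G = AH`. -/
structure IsMinimalDecomposition (p : ℕ) {G : Type} [Group G] (A H : Subgroup G) extends
    IsDecomposition p A H : Prop where
  minA : ∀ B : Subgroup G, B < A → ¬ ∃ H' : Subgroup G, IsDecomposition p B H'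
  minH : ∀ H' : Subgroup G, H' < H → ¬ (IsSemiabelianP p ↥H' ∧
    (A : Set G) * (H' : Set G) = Set.univ)

/-! With `N = A^p[A,H]`, the abelian group `A/N` is an `𝔽_p`-vector space, so the image of
`A ∩ H` has a complement there; its preimage `B` satisfies `A = B (A ∩ H)`, hence `G = BH`, and
`[A,H] ≤ N ≤ B` makes `B` normal in `G = AH`. If `A ∩ H ⊄ N` then `B < A`, so `G = BH` is a
decomposition contradicting the minimality of `A`. -/

theorem Subgroup.exists_isCompl_of_forall_pow_eq_one {p : ℕ} [Fact p.Prime] {Q : Type*}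
    [CommGroup Q] (hQ : ∀ q : Q, q ^ p = 1) (K : Subgroup Q) :
    ∃ U : Subgroup Q, IsCompl K U := by
  have : Module (ZMod p) (Additive Q) :=
    AddCommGroup.zmodModule fun q => congrArg Additive.ofMul (hQ q.toMul)
  let e : Subgroup Q ≃o Submodule (ZMod p) (Additive Q) :=
    Subgroup.toAddSubgroup.trans (AddSubgroup.toZModSubmodule p)
  obtain ⟨V, hV⟩ := (e K).exists_isCompl
  exact ⟨e.symm V, by simpa using e.symm.isCompl hV⟩

theorem Subgroup.exists_sup_eq_top_inf_le_of_forall_pow_mem {p : ℕ} [Fact p.Prime] {C : Type*}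
    [CommGroup C] {N : Subgroup C} (hN : ∀ c : C, c ^ p ∈ N) (K : Subgroup C) :
    ∃ B : Subgroup C, N ≤ B ∧ B ⊔ K = ⊤ ∧ B ⊓ K ≤ N := by
  let π := QuotientGroup.mk' N
  have hπ : ∀ q : C ⧸ N, q ^ p = 1 := by
    rintro ⟨c⟩
    exact (QuotientGroup.eq_one_iff _).2 (hN c)
  obtain ⟨U, hU⟩ := exists_isCompl_of_forall_pow_eq_one hπ (K.map π)
  have hNU : N ≤ U.comap π := by
    intro n hn
    change π n ∈ U
    rw [show π n = 1 from (QuotientGroup.eq_one_iff n).2 hn]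
    exact U.one_mem
  refine ⟨U.comap π, hNU, ?_, ?_⟩
  · rw [sup_comm, eq_top_iff, ← comap_top π, ← hU.sup_eq_top,
      ← comap_sup_eq (f := π) _ _ (QuotientGroup.mk'_surjective N), comap_map_eq,
      QuotientGroup.ker_mk', sup_assoc, sup_eq_right.2 hNU]
  · rintro c ⟨hcU, hcK⟩
    have : π c ∈ K.map π ⊓ U := ⟨mem_map_of_mem π hcK, hcU⟩
    rwa [hU.inf_eq_bot, mem_bot, ← MonoidHom.mem_ker, QuotientGroup.ker_mk'] at this

open scoped IsMulCommutative in
theorem Subgroup.exists_subset_mul_inf_le_of_forall_pow_mem {p : ℕ} [Fact p.Prime] {G : Type*}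
    [Group G] {A N : Subgroup G} [IsMulCommutative A] (hNA : N ≤ A)
    (hN : ∀ a ∈ A, a ^ p ∈ N) (K : Subgroup G) :
    ∃ B ≤ A, N ≤ B ∧ (A : Set G) ⊆ (B : Set G) * K ∧ B ⊓ K ≤ N := by
  obtain ⟨B, hNB, hBK, hBKN⟩ := exists_sup_eq_top_inf_le_of_forall_pow_mem
    (N := N.subgroupOf A) (fun a => mem_subgroupOf.2 (hN a a.2)) (K.subgroupOf A)
  refine ⟨B.map A.subtype, map_subtype_le B,
    fun n hn => ⟨⟨n, hNA hn⟩, hNB hn, rfl⟩, ?_, ?_⟩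
  · intro a ha
    obtain ⟨b, hb, k, hk, hbk⟩ := mem_sup.1 (hBK ▸ mem_top (⟨a, ha⟩ : A))
    exact ⟨b, ⟨b, hb, rfl⟩, k, hk, congrArg Subtype.val hbk⟩
  · rintro _ ⟨⟨b, hb, rfl⟩, hbK⟩
    exact hBKN ⟨hb, hbK⟩

theorem Subgroup.normal_of_commutator_le {G : Type*} [Group G] {A H B : Subgroup G}
    [IsMulCommutative A] (hAH : (A : Set G) * (H : Set G) = Set.univ) (hBA : B ≤ A)
    (hBH : ⁅B, H⁆ ≤ B) : B.Normal := by
  refine ⟨fun b hb g => ?_⟩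
  obtain ⟨a, ha, h, hh, rfl⟩ := hAH.symm ▸ Set.mem_univ g
  have hconj : h * b * h⁻¹ ∈ B := by
    rw [show h * b * h⁻¹ = b * ⁅b⁻¹, h⁆ by group]
    exact mul_mem hb (hBH (commutator_mem_commutator (inv_mem hb) hh))
  rwa [show a * h * b * (a * h)⁻¹ = a * (h * b * h⁻¹) * a⁻¹ by group,
    setLike_mul_comm ha (hBA hconj), mul_inv_cancel_right]

section pPowComm

variable {p : ℕ} {G : Type} [Group G] {A H : Subgroup G}

theorem pow_mem_pPowComm {a : G} (ha : a ∈ A) : a ^ p ∈ pPowComm p A H :=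
  Subgroup.subset_closure (Or.inl ⟨a, ha, rfl⟩)

theorem commutator_le_pPowComm : ⁅A, H⁆ ≤ pPowComm p A H :=
  Subgroup.commutator_le.2 fun a ha h hh => Subgroup.subset_closure (Or.inr ⟨a, ha, h, hh, rfl⟩)

theorem pPowComm_le [A.Normal] : pPowComm p A H ≤ A := by
  refine (Subgroup.closure_le A).2 ?_
  rintro _ (⟨a, ha, rfl⟩ | ⟨a, ha, h, hh, rfl⟩)
  · exact pow_mem ha p
  · exact Subgroup.commutator_le_left A H (Subgroup.commutator_mem_commutator ha hh)

theorem exists_lt_isDecomposition_of_not_le_pPowComm [Fact p.Prime] (hd : IsDecomposition p A H)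
    (hnle : ¬ A ⊓ H ≤ pPowComm p A H) : ∃ B < A, IsDecomposition p B H := by
  have := hd.normal
  have := hd.comm
  obtain ⟨B, hBA, hNB, hAB, hBH⟩ := Subgroup.exists_subset_mul_inf_le_of_forall_pow_mem (p := p)
    (pPowComm_le (A := A) (H := H)) (fun a ha => pow_mem_pPowComm ha) H
  obtain ⟨x, ⟨hxA, hxH⟩, hxN⟩ := SetLike.not_le_iff_exists.1 hnle
  refine ⟨B, lt_of_le_of_ne hBA fun hBA' => hxN (hBH ⟨hBA' ▸ hxA, hxH⟩), ?_⟩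
  refine ⟨Subgroup.normal_of_commutator_le hd.prod hBA ?_, ?_, hd.semi, hd.proper, ?_⟩
  · exact (Subgroup.commutator_mono hBA le_rfl).trans (commutator_le_pPowComm.trans hNB)
  · exact isMulCommutative_iff_of_setLike.2 fun a ha b hb => setLike_mul_comm (hBA ha) (hBA hb)
  · refine Set.eq_univ_of_univ_subset ?_
    calc Set.univ = (A : Set G) * (H : Set G) := hd.prod.symm
      _ ⊆ (B : Set G) * (H : Set G) * (H : Set G) := Set.mul_subset_mul_right hAB
      _ = (B : Set G) * (H : Set G) := by rw [mul_assoc, coe_mul_coe]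

end pPowComm

theorem inf_le_pPowComm_of_minimalDecomposition_general (p : ℕ) [Fact p.Prime] (G : Type)
    [Group G] (A H : Subgroup G)
    (hmin : IsMinimalDecomposition p A H) :
    A ⊓ H ≤ pPowComm p A H := by
  by_contra hnle
  obtain ⟨B, hBA, hB⟩ :=
    exists_lt_isDecomposition_of_not_le_pPowComm hmin.toIsDecomposition hnle
  exact hmin.minA B hBA ⟨H, hB⟩

/-- For a minimal decomposition `G = AH` of a semiabelian `p`-group,
`A ∩ H ⊆ A^p[A,H]`. -/
theorem inf_le_pPowComm_of_minimalDecomposition (p : ℕ) [Fact p.Prime] (G : Type)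
    [Group G] [Finite G] (hG : IsSemiabelianP p G) (A H : Subgroup G)
    (hmin : IsMinimalDecomposition p A H) :
    A ⊓ H ≤ pPowComm p A H :=
  inf_le_pPowComm_of_minimalDecomposition_general p G A H hmin
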